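/- (Family XVIII) In the dual bracket of the Galilei bialgebra ansatz, take γ ∈ ℝ³ with γ ≠ 0 and real numbers L, X, and set α = 0, β = 0, φ = 0, n = 0, v = 0, θ = 0, ρ = 0, ω = 0, χ = 0, λ_i = L γ_i, ξ_i = X γ_i, σ_{ij} = −ε_{ijk} γ_k. Then the resulting bracket satisfies the Jacobi identity, and hence defines a Lie algebra structure on the 10-dimensional space spanned by H̃, P̃_i, K̃_i, J̃_i. -/
import Mathlib


/-- The Levi-Civita symbol on `{1,2,3}` (indexed by `Fin 3`). -/
def eps (i j k : Fin 3) : ℝ :=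
  if (i, j, k) = (0, 1, 2) ∨ (i, j, k) = (1, 2, 0) ∨ (i, j, k) = (2, 0, 1) then 1
  else if (i, j, k) = (2, 1, 0) ∨ (i, j, k) = (1, 0, 2) ∨ (i, j, k) = (0, 2, 1) then -1
  else 0

/-- The Kronecker delta on `Fin 3`. -/
def kron (i j : Fin 3) : ℝ := if i = j then 1 else 0

/-- The 10-dimensional real vector space with basis `H̃, P̃_i, K̃_i, J̃_i`, an element
being recorded by its coefficients `(h, p, k, j)` in this basis. -/
abbrev DualV : Type := ℝ × (Fin 3 → ℝ) × (Fin 3 → ℝ) × (Fin 3 → ℝ)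

/-- The dual bracket of the Galilei bialgebra ansatz: the antisymmetric bilinear
bracket on the span of `H̃, P̃_i, K̃_i, J̃_i` determined by the structure constants
(with parameters `α, γ, φ, λ, ξ, n ∈ ℝ³`, `β, v, θ, ρ ∈ ℝ`, `σ, χ, ω ∈ M₃(ℝ)`):
`[H̃, J̃_k] = ε_{ikl} α_l J̃_i`;
`[H̃, P̃_k] = γ_k H̃ + (β δ_{ik} + ε_{ikl} α_l) P̃_i + ε_{ikl} φ_l J̃_i`;
`[H̃, K̃_k] = (β δ_{ik} + ε_{ikl} α_l) K̃_i + ε_{ikl} γ_l J̃_i`;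
`[K̃_k, J̃_l] = 2(n_k δ_{li} − n_i δ_{kl}) K̃_i + 2(ε_{ikn} ω_{ln} + ε_{iln} ω_{nk}) J̃_i`;
`[P̃_l, P̃_m] = (χ_{lm} − χ_{ml}) H̃ + 2 ε_{klm}(ρ δ_{ki} + (1/2)(σ_{ik} − σ_{nn} δ_{ik})) P̃_i`
`  + 2(v ε_{ilm} + (1/2)(φ_l δ_{im} − φ_m δ_{il})) K̃_i + 2(λ_l δ_{im} − λ_m δ_{il}) J̃_i`;
`[P̃_k, K̃_l] = (2 ξ_n ε_{nkl} − θ δ_{kl}) H̃ + (2 ε_{nki} ω_{nl} − ω_{nn} ε_{lki}) P̃_i`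
`  + (ρ ε_{kli} − ε_{lin} σ_{kn} − δ_{ki} γ_l) K̃_i + (ε_{ikn} χ_{nl} + ε_{iln} χ_{kn}) J̃_i`;
`[P̃_k, J̃_l] = (2 ω_{lk} − ω_{nn} δ_{lk}) H̃ + 2(n_k δ_{li} − n_i δ_{kl}) P̃_i`
`  − (β ε_{kli} + α_l δ_{ki}) K̃_i + (ε_{ikn} σ_{nl} + ε_{iln} σ_{kn}) J̃_i`;
`[K̃_m, K̃_n] = 2 ε_{kmn} ω_{ki} K̃_i + 2(ξ_m δ_{ni} − ξ_n δ_{mi}) J̃_i`;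
`[J̃_k, J̃_l] = 2(n_k δ_{li} − n_l δ_{ki}) J̃_i`. -/
noncomputable def dualBracket (α γv φv lam ξ nv : Fin 3 → ℝ) (β v θ ρ : ℝ)
    (σ χ ω : Fin 3 → Fin 3 → ℝ) (X Y : DualV) : DualV :=
  -- coefficients of `X` and `Y` on `H̃, P̃, K̃, J̃`
  let h : ℝ := X.1; let p := X.2.1; let κ := X.2.2.1; let j := X.2.2.2
  let h' : ℝ := Y.1; let p' := Y.2.1; let κ' := Y.2.2.1; let j' := Y.2.2.2
  ( -- H̃ component
    (∑ k, (h * p' k - h' * p k) * γv k)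
    + (∑ l, ∑ m, p l * p' m * (χ l m - χ m l))
    + (∑ k, ∑ l, (p k * κ' l - p' k * κ l) * (2 * (∑ n, ξ n * eps n k l) - θ * kron k l))
    + (∑ k, ∑ l, (p k * j' l - p' k * j l) * (2 * ω l k - (∑ n, ω n n) * kron l k)),
    -- P̃ component
    fun i =>
      (∑ k, (h * p' k - h' * p k) * (β * kron i k + ∑ l, eps i k l * α l))
      + (∑ l, ∑ m, p l * p' m *
          (2 * ∑ k, eps k l m * (ρ * kron k i + (1/2) * (σ i k - (∑ n, σ n n) * kron i k))))
      + (∑ k, ∑ l, (p k * κ' l - p' k * κ l) *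
          (2 * (∑ n, eps n k i * ω n l) - (∑ n, ω n n) * eps l k i))
      + (∑ k, ∑ l, (p k * j' l - p' k * j l) * (2 * (nv k * kron l i - nv i * kron k l))),
    -- K̃ component
    fun i =>
      (∑ k, (h * κ' k - h' * κ k) * (β * kron i k + ∑ l, eps i k l * α l))
      + (∑ k, ∑ l, (κ k * j' l - κ' k * j l) * (2 * (nv k * kron l i - nv i * kron k l)))
      + (∑ l, ∑ m, p l * p' m *
          (2 * (v * eps i l m + (1/2) * (φv l * kron i m - φv m * kron i l))))
      + (∑ k, ∑ l, (p k * κ' l - p' k * κ l) *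
          (ρ * eps k l i - (∑ n, eps l i n * σ k n) - kron k i * γv l))
      + (∑ k, ∑ l, (p k * j' l - p' k * j l) * (-(β * eps k l i + α l * kron k i)))
      + (∑ m, ∑ n, κ m * κ' n * (2 * ∑ k, eps k m n * ω k i)),
    -- J̃ component
    fun i =>
      (∑ k, (h * j' k - h' * j k) * (∑ l, eps i k l * α l))
      + (∑ k, (h * p' k - h' * p k) * (∑ l, eps i k l * φv l))
      + (∑ k, (h * κ' k - h' * κ k) * (∑ l, eps i k l * γv l))
      + (∑ k, ∑ l, (κ k * j' l - κ' k * j l) *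
          (2 * ∑ n, (eps i k n * ω l n + eps i l n * ω n k)))
      + (∑ l, ∑ m, p l * p' m * (2 * (lam l * kron i m - lam m * kron i l)))
      + (∑ k, ∑ l, (p k * κ' l - p' k * κ l) * (∑ n, (eps i k n * χ n l + eps i l n * χ k n)))
      + (∑ k, ∑ l, (p k * j' l - p' k * j l) * (∑ n, (eps i k n * σ n l + eps i l n * σ k n)))
      + (∑ m, ∑ n, κ m * κ' n * (2 * (ξ m * kron n i - ξ n * kron m i)))
      + (∑ k, ∑ l, j k * j' l * (2 * (nv k * kron l i - nv l * kron k i))) )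

/-- A bracket operation on `DualV` satisfies the Jacobi identity. -/
def JacobiHolds (br : DualV → DualV → DualV) : Prop :=
  ∀ X Y Z : DualV, br X (br Y Z) + br Z (br X Y) + br Y (br Z X) = 0


set_option maxHeartbeats 4000000

lemma finmk0 : (⟨0, by omega⟩ : Fin 3) = 0 := rfl
lemma finmk1 : (⟨1, by omega⟩ : Fin 3) = 1 := rfl
lemma finmk2 : (⟨2, by omega⟩ : Fin 3) = 2 := rfl

/-- dot product on `Fin 3 → ℝ` -/
def dot3 (u w : Fin 3 → ℝ) : ℝ := ∑ i, u i * w i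

/-- cross product on `Fin 3 → ℝ` -/
def cross3 (u w : Fin 3 → ℝ) : Fin 3 → ℝ :=
  fun i => ∑ k, ∑ l, eps i k l * u k * w l

/-- The simplified form of the family XVIII bracket. -/
noncomputable def simpleBr (g : Fin 3 → ℝ) (L X : ℝ) (A B : DualV) : DualV :=
  ( (A.1 * dot3 g B.2.1 - B.1 * dot3 g A.2.1)
      + 2 * X * (dot3 g (cross3 A.2.1 B.2.2.1) - dot3 g (cross3 B.2.1 A.2.2.1)),
    fun i => A.2.1 i * dot3 g B.2.1 - B.2.1 i * dot3 g A.2.1,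
    fun i => -(g i) * (dot3 A.2.1 B.2.2.1 - dot3 B.2.1 A.2.2.1),
    fun i =>
      A.1 * cross3 B.2.2.1 g i - B.1 * cross3 A.2.2.1 g i
      + 2 * L * (dot3 g A.2.1 * B.2.1 i - dot3 g B.2.1 * A.2.1 i)
      + (A.2.1 i * dot3 g B.2.2.2 - dot3 g A.2.1 * B.2.2.2 i
         - B.2.1 i * dot3 g A.2.2.2 + dot3 g B.2.1 * A.2.2.2 i)
      + 2 * X * (dot3 g A.2.2.1 * B.2.2.1 i - dot3 g B.2.2.1 * A.2.2.1 i) )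

lemma dualBracket_eq (g : Fin 3 → ℝ) (L X : ℝ) :
    dualBracket 0 g 0 (fun i => L * g i) (fun i => X * g i) 0 0 0 0 0
      (fun i j => -(∑ k, eps i j k * g k)) 0 0 = simpleBr g L X := by
  funext A B
  obtain ⟨ah, ap, ak, aj⟩ := A
  obtain ⟨bh, bp, bk, bj⟩ := B
  refine Prod.ext ?_ (Prod.ext (funext fun i => ?_) (Prod.ext (funext fun i => ?_)
    (funext fun i => ?_)))
  case refine_1 =>
    simp (config := { decide := true }) only [dualBracket, simpleBr, dot3, cross3,
      Fin.sum_univ_three, eps, kron, Pi.zero_apply]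
    norm_num
    ring
  all_goals
    fin_cases i <;>
    · simp (config := { decide := true }) only [dualBracket, simpleBr, dot3, cross3,
        Fin.sum_univ_three, eps, kron, Pi.zero_apply, finmk0, finmk1, finmk2]
      norm_num [finmk0, finmk1, finmk2]
      ring

/-- (Family XVIII) For `γ ≠ 0`, `λ = L γ`, `ξ = X γ`, `σ_{ij} = −ε_{ijk} γ_k`,
and all other parameters zero, the dual bracket of the Galilei bialgebra ansatz
satisfies the Jacobi identity, and hence defines a Lie algebra structure. -/
theorem familyXVIII_jacobi (γv : Fin 3 → ℝ) (hγ : γv ≠ 0) (L X : ℝ) :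
    JacobiHolds (dualBracket 0 γv 0 (fun i => L * γv i) (fun i => X * γv i) 0
      0 0 0 0
      (fun i j => -(∑ k, eps i j k * γv k))
      0 0) := by
  rw [dualBracket_eq γv L X]
  intro A B C
  obtain ⟨ah, ap, ak, aj⟩ := A
  obtain ⟨bh, bp, bk, bj⟩ := B
  obtain ⟨ch, cp, ck, cj⟩ := C
  refine Prod.ext ?_ (Prod.ext (funext fun i => ?_) (Prod.ext (funext fun i => ?_)
    (funext fun i => ?_)))
  case refine_1 =>
    simp (config := { decide := true }) only [simpleBr, dot3, cross3,
      Fin.sum_univ_three, eps, Pi.zero_apply, Prod.mk_add_mk, Pi.add_apply,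
      Prod.fst_add, Prod.snd_add, Prod.fst_zero, Prod.snd_zero]
    norm_num
    ring
  all_goals
    fin_cases i <;>
    · simp (config := { decide := true }) only [simpleBr, dot3, cross3,
        Fin.sum_univ_three, eps, Pi.zero_apply, Prod.mk_add_mk, Pi.add_apply,
        Prod.fst_add, Prod.snd_add, Prod.fst_zero, Prod.snd_zero, finmk0, finmk1, finmk2]
      norm_num [finmk0, finmk1, finmk2]
      ring
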